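/- arXiv:2309.04268 — 7 statements merged into one kernel-verified Lean document; each statement's English description precedes it below -/
import Mathlib

section
/- For every positive integer d, the sequence ν_d(k) is strictly decreasing in k on the positive integers: ν_d(k) > ν_d(k+1) for every integer k ≥ 1. -/
open Real Filter

/-- Distinct eigenvalues (up to constants) of the NTK on the sphere `S^d`:
`ν_d(k) = d^d · k^(k−2) · (k+d)^(−(k+d+1)) · (k² + k·d + d)`. -/
noncomputable def nuNT (d k : ℕ) : ℝ :=
  (d : ℝ) ^ (d : ℝ) * (k : ℝ) ^ ((k : ℝ) - 2) *
    ((k : ℝ) + (d : ℝ)) ^ (-((k : ℝ) + (d : ℝ) + 1)) *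
    ((k : ℝ) ^ 2 + (k : ℝ) * (d : ℝ) + (d : ℝ))

/-- Dimension of the space of spherical harmonics of degree `k` on `S^d ⊆ ℝ^(d+1)`. -/
def Nsph (d k : ℕ) : ℕ :=
  if k = 0 then 1
  else (k + d).choose k - (if 2 ≤ k then (k + d - 2).choose (k - 2) else 0)

/-- `λ_d(0) = 1` and `λ_d(k) = ν_d(k)` for `k ≥ 1`. -/
noncomputable def lamNT (d k : ℕ) : ℝ := if k = 0 then 1 else nuNT d k

/-!
Up to the positive factor `d ^ d`, with `q(k) = k² + kd + d`,
`log ν_d(k+1) - log ν_d(k) = k (log (k+1) - log k) - (k+d+1) (log (k+d+1) - log (k+d))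
  + log (k² q(k+1) / ((k+1)(k+d+1) q(k)))`.
The bounds `1/(x+1) ≤ log (x+1) - log x < 1/x` make the first two terms sum to less than `1 - 1`,
and the last term is `≤ 0` since
`(k+1)(k+d+1) q(k) - k² q(k+1) = d (k³ + k²d + 2k² + 2kd + d + 3k + 1)`.
-/

lemma log_add_one_sub_log_lt_inv {x : ℝ} (hx : 0 < x) : log (x + 1) - log x < x⁻¹ := by
  have hne : (x + 1) / x ≠ 1 := by
    rw [Ne, div_eq_one_iff_eq hx.ne']; linarith
  calc log (x + 1) - log x = log ((x + 1) / x) := (log_div (by positivity) hx.ne').symm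
    _ < (x + 1) / x - 1 := log_lt_sub_one_of_pos (by positivity) hne
    _ = x⁻¹ := by field_simp; ring

lemma inv_add_one_le_log_add_one_sub_log {x : ℝ} (hx : 0 < x) :
    (x + 1)⁻¹ ≤ log (x + 1) - log x :=
  calc (x + 1)⁻¹ = 1 - ((x + 1) / x)⁻¹ := by field_simp; ring
    _ ≤ log ((x + 1) / x) := one_sub_inv_le_log_of_pos (by positivity)
    _ = log (x + 1) - log x := log_div (by positivity) hx.ne'

lemma rpow_self_pos {x : ℝ} (hx : 0 ≤ x) : 0 < x ^ x := by
  rcases hx.eq_or_lt with rfl | hx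
  · simp
  · exact rpow_pos_of_pos hx x

noncomputable def nuProfile (b a : ℝ) : ℝ :=
  a ^ (a - 2) * (a + b) ^ (-(a + b + 1)) * (a ^ 2 + a * b + b)

lemma nuNT_eq_rpow_mul_nuProfile (d k : ℕ) : nuNT d k = (d : ℝ) ^ (d : ℝ) * nuProfile d k := by
  unfold nuNT nuProfile; ring

section
variable {a b : ℝ}

lemma nuProfile_pos (ha : 0 < a) (hb : 0 ≤ b) : 0 < nuProfile b a := by
  unfold nuProfile; positivity

lemma log_nuProfile (ha : 0 < a) (hb : 0 ≤ b) :
    log (nuProfile b a) =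
      (a - 2) * log a - (a + b + 1) * log (a + b) + log (a ^ 2 + a * b + b) := by
  have hab : 0 < a + b := by linarith
  unfold nuProfile
  rw [log_mul (by positivity) (by positivity), log_mul (by positivity) (by positivity),
    log_rpow ha, log_rpow hab]
  ring

lemma sq_mul_quadratic_add_one_le (ha : 0 ≤ a) (hb : 0 ≤ b) :
    a ^ 2 * ((a + 1) ^ 2 + (a + 1) * b + b) ≤ (a + 1) * (a + b + 1) * (a ^ 2 + a * b + b) := by
  have : 0 ≤ b * (a ^ 3 + a ^ 2 * b + 2 * a ^ 2 + 2 * a * b + b + 3 * a + 1) := by positivity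
  linear_combination this

lemma nuProfile_add_one_lt (ha : 0 < a) (hb : 0 ≤ b) : nuProfile b (a + 1) < nuProfile b a := by
  have ha1 : 0 < a + 1 := by linarith
  have hab : 0 < a + b := by linarith
  have hq : 0 < a ^ 2 + a * b + b := by positivity
  have hq1 : 0 < (a + 1) ^ 2 + (a + 1) * b + b := by positivity
  rw [← log_lt_log_iff (nuProfile_pos ha1 hb) (nuProfile_pos ha hb), log_nuProfile ha1 hb,
    log_nuProfile ha hb, show a + 1 + b = a + b + 1 by ring]
  have hsmall : a * (log (a + 1) - log a) < 1 := by
    have := mul_lt_mul_of_pos_left (log_add_one_sub_log_lt_inv ha) ha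
    rwa [mul_inv_cancel₀ ha.ne'] at this
  have hlarge : 1 ≤ (a + b + 1) * (log (a + b + 1) - log (a + b)) := by
    have := mul_le_mul_of_nonneg_left (inv_add_one_le_log_add_one_sub_log hab)
      (by positivity : 0 ≤ a + b + 1)
    rwa [mul_inv_cancel₀ (by positivity)] at this
  have hpoly : 2 * log a + log ((a + 1) ^ 2 + (a + 1) * b + b)
      ≤ log (a + 1) + log (a + b + 1) + log (a ^ 2 + a * b + b) := by
    have := log_le_log (by positivity) (sq_mul_quadratic_add_one_le ha.le hb)
    rwa [log_mul (by positivity) hq1.ne', log_mul (by positivity) hq.ne',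
      log_mul ha1.ne' (by positivity), log_pow, Nat.cast_ofNat] at this
  linear_combination hsmall + hlarge + hpoly
end

theorem nuNT_strict_decreasing_general (d : ℕ) :
    ∀ k : ℕ, 1 ≤ k → nuNT d (k + 1) < nuNT d k := by
  intro k hk
  have hk' : (0 : ℝ) < k := by exact_mod_cast hk
  rw [nuNT_eq_rpow_mul_nuProfile, nuNT_eq_rpow_mul_nuProfile, Nat.cast_succ]
  exact mul_lt_mul_of_pos_left (nuProfile_add_one_lt hk' d.cast_nonneg)
    (rpow_self_pos d.cast_nonneg)

/-- For every positive integer d, the sequence ν_d is strictly decreasing on the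
positive integers. -/
theorem nuNT_strict_decreasing (d : ℕ) (hd : 1 ≤ d) :
    ∀ k : ℕ, 1 ≤ k → nuNT d (k + 1) < nuNT d k :=
  nuNT_strict_decreasing_general d
end

section
/- For every real number d ≥ 1, the function g(t) = (t−2)·ln t − (t+d+1)·ln(t+d) + ln(t² + t·d + d) is strictly decreasing on (0, ∞); equivalently, for every t > 0 one has ln(t/(t+d)) − (t³ + 2t²d + t d² + 3td + 2d²)/(t·(t+d)·(t² + td + d)) < 0, and this expression equals g′(t). -/
open Real Filter

/-! The derivative is `log (t / (t + d))`, negative since `t < t + d`, minus a quotient of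
polynomials with positive coefficients; hence it is negative and `g` strictly decreases. -/

namespace NTKEigenvalue

/-- The logarithm of `ν_d` (without the constant `d ^ d`), extended to real `t`. -/
noncomputable def logNu (d t : ℝ) : ℝ :=
  (t - 2) * log t - (t + d + 1) * log (t + d) + log (t ^ 2 + t * d + d)

noncomputable def logNuDeriv (d t : ℝ) : ℝ :=
  log (t / (t + d)) -
    (t ^ 3 + 2 * t ^ 2 * d + t * d ^ 2 + 3 * t * d + 2 * d ^ 2) /
      (t * (t + d) * (t ^ 2 + t * d + d))

variable {d t : ℝ}

theorem hasDerivAt_logNu (hd : 0 < d) (ht : 0 < t) :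
    HasDerivAt (logNu d) (logNuDeriv d t) t := by
  have htd : 0 < t + d := by linarith
  have hq : 0 < t ^ 2 + t * d + d := by positivity
  have h₁ : HasDerivAt (fun t : ℝ => (t - 2) * log t) (1 * log t + (t - 2) * t⁻¹) t :=
    ((hasDerivAt_id' t).sub_const 2).mul (hasDerivAt_log ht.ne')
  have h₂ : HasDerivAt (fun t : ℝ => (t + d + 1) * log (t + d))
      (1 * log (t + d) + (t + d + 1) * (1 / (t + d))) t :=
    (((hasDerivAt_id' t).add_const d).add_const 1).mul
      (((hasDerivAt_id' t).add_const d).log htd.ne')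
  have h₃ : HasDerivAt (fun t : ℝ => log (t ^ 2 + t * d + d))
      ((2 * t + d) / (t ^ 2 + t * d + d)) t := by
    have hq' : HasDerivAt (fun t : ℝ => t ^ 2 + t * d + d) (2 * t + d) t := by
      simpa using ((hasDerivAt_pow 2 t).add ((hasDerivAt_id' t).mul_const d)).add_const d
    exact hq'.log hq.ne'
  refine ((h₁.sub h₂).add h₃).congr_deriv ?_
  rw [logNuDeriv, log_div ht.ne' htd.ne']
  field_simp
  ring

theorem logNuDeriv_neg (hd : 0 < d) (ht : 0 < t) : logNuDeriv d t < 0 := by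
  have htd : 0 < t + d := by linarith
  have hlog : log (t / (t + d)) < 0 :=
    log_neg (div_pos ht htd) ((div_lt_one htd).mpr (by linarith))
  have hfrac : 0 < (t ^ 3 + 2 * t ^ 2 * d + t * d ^ 2 + 3 * t * d + 2 * d ^ 2) /
      (t * (t + d) * (t ^ 2 + t * d + d)) := by
    positivity
  rw [logNuDeriv]
  linarith

theorem strictAntiOn_logNu (hd : 0 < d) : StrictAntiOn (logNu d) (Set.Ioi 0) := by
  refine strictAntiOn_of_deriv_neg (convex_Ioi 0)
    (fun t ht => (hasDerivAt_logNu hd ht).continuousAt.continuousWithinAt) fun t ht => ?_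
  rw [interior_Ioi] at ht
  rw [(hasDerivAt_logNu hd ht).deriv]
  exact logNuDeriv_neg hd ht

end NTKEigenvalue

open NTKEigenvalue in
/-- For any real d ≥ 1, the function g(t) = (t−2)·ln t − (t+d+1)·ln(t+d) + ln(t² + t·d + d)
is strictly decreasing on (0, ∞); moreover for every t > 0 its derivative equals
ln(t/(t+d)) − (t³+2t²d+td²+3td+2d²)/(t·(t+d)·(t²+td+d)), which is negative. -/
theorem g_strict_anti (d : ℝ) (hd : 1 ≤ d) :
    StrictAntiOn
      (fun t : ℝ => (t - 2) * Real.log t - (t + d + 1) * Real.log (t + d)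
        + Real.log (t ^ 2 + t * d + d)) (Set.Ioi 0) ∧
    ∀ t : ℝ, 0 < t →
      HasDerivAt
        (fun t : ℝ => (t - 2) * Real.log t - (t + d + 1) * Real.log (t + d)
          + Real.log (t ^ 2 + t * d + d))
        (Real.log (t / (t + d)) -
          (t ^ 3 + 2 * t ^ 2 * d + t * d ^ 2 + 3 * t * d + 2 * d ^ 2) /
            (t * (t + d) * (t ^ 2 + t * d + d))) t ∧
      Real.log (t / (t + d)) -
          (t ^ 3 + 2 * t ^ 2 * d + t * d ^ 2 + 3 * t * d + 2 * d ^ 2) /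
            (t * (t + d) * (t ^ 2 + t * d + d)) < 0 := by
  have hd₀ : 0 < d := one_pos.trans_le hd
  exact ⟨strictAntiOn_logNu hd₀, fun t ht => ⟨hasDerivAt_logNu hd₀ ht, logNuDeriv_neg hd₀ ht⟩⟩
end

section
/- For every positive integer d, the series Σ_{k=1}^∞ N(d,k) · ν_d(k) converges (has a finite value). -/
open Real Filter

/-!
By Pascal's rule `N(d,k)` is a sum of two binomial coefficients, each at most
`(k+d)^(d-1)`. Since `k^k ≤ (k+d)^k` and `k² + kd + d ≤ (k+d)²`, also
`ν_d(k) ≤ d^d / (k² (k+d)^(d-1))`, so the terms of the series are at most `2 d^d / k²`.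
-/

lemma Nsph_succ_succ (e k : ℕ) :
    Nsph (e + 1) (k + 1) = (k + e).choose k + (k + 1 + e).choose (k + 1) := by
  rcases k with _ | k
  · simp [Nsph]; omega
  · have h := Nat.choose_succ_succ' (k + e + 2) (k + 1)
    have h' := Nat.choose_succ_succ' (k + e + 1) k
    simp only [Nsph, if_neg (Nat.succ_ne_zero _), if_pos (by omega : 2 ≤ k + 1 + 1),
      show k + 1 + 1 - 2 = k by omega, show k + 1 + 1 + (e + 1) - 2 = k + e + 1 by omega]
    ring_nf at h h' ⊢
    omega

lemma Nsph_le_two_mul_pow (d k : ℕ) (hd : 1 ≤ d) : Nsph d k ≤ 2 * (k + d) ^ (d - 1) := by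
  obtain ⟨e, rfl⟩ : ∃ e, d = e + 1 := ⟨d - 1, by omega⟩
  have hchoose (n : ℕ) (hn : n ≤ k) : (n + e).choose n ≤ (k + (e + 1)) ^ e :=
    calc (n + e).choose n = (n + e).choose e := Nat.choose_symm_add
      _ ≤ (n + e) ^ e := Nat.choose_le_pow _ _
      _ ≤ (k + (e + 1)) ^ e := Nat.pow_le_pow_left (by omega) e
  rcases k with _ | k
  · simp only [Nsph, if_pos]
    exact Nat.one_le_iff_ne_zero.mpr (by positivity)
  · rw [Nsph_succ_succ, two_mul, Nat.add_sub_cancel]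
    exact add_le_add (hchoose k (by omega)) (hchoose (k + 1) le_rfl)

lemma nuNT_eq_div (d k : ℕ) (hk : 0 < k) :
    nuNT d k = (d : ℝ) ^ d * (k : ℝ) ^ k * ((k : ℝ) ^ 2 + k * d + d) /
      ((k : ℝ) ^ 2 * ((k : ℝ) + d) ^ (k + d + 1)) := by
  have hk' : (0 : ℝ) < k := by exact_mod_cast hk
  have hkd : (0 : ℝ) < k + d := by positivity
  rw [nuNT, Real.rpow_natCast, Real.rpow_sub hk', Real.rpow_natCast, Real.rpow_two,
    Real.rpow_neg hkd.le, show (k : ℝ) + d + 1 = ((k + d + 1 : ℕ) : ℝ) by push_cast; ring,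
    Real.rpow_natCast]
  field_simp

lemma nuNT_le_div (d k : ℕ) (hd : 1 ≤ d) (hk : 0 < k) :
    nuNT d k ≤ (d : ℝ) ^ d / ((k : ℝ) ^ 2 * ((k : ℝ) + d) ^ (d - 1)) := by
  have hk1 : (1 : ℝ) ≤ k := by exact_mod_cast hk
  have hquad : (k : ℝ) ^ 2 + k * d + d ≤ ((k : ℝ) + d) ^ 2 := by
    nlinarith [(Nat.cast_nonneg d : (0 : ℝ) ≤ d)]
  calc nuNT d k = (d : ℝ) ^ d * (k : ℝ) ^ k * ((k : ℝ) ^ 2 + k * d + d) /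
        ((k : ℝ) ^ 2 * ((k : ℝ) + d) ^ (k + d + 1)) := nuNT_eq_div d k hk
    _ ≤ (d : ℝ) ^ d * ((k : ℝ) + d) ^ k * ((k : ℝ) + d) ^ 2 /
        ((k : ℝ) ^ 2 * ((k : ℝ) + d) ^ (k + d + 1)) := by
          gcongr; linarith [(Nat.cast_nonneg d : (0 : ℝ) ≤ d)]
    _ = (d : ℝ) ^ d / ((k : ℝ) ^ 2 * ((k : ℝ) + d) ^ (d - 1)) := by
      rw [show k + d + 1 = k + 2 + (d - 1) by omega, pow_add, pow_add]
      field_simp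

lemma nuNT_nonneg (d k : ℕ) : 0 ≤ nuNT d k := by
  unfold nuNT; positivity

lemma Nsph_mul_nuNT_le (d k : ℕ) (hd : 1 ≤ d) (hk : 0 < k) :
    (Nsph d k : ℝ) * nuNT d k ≤ 2 * (d : ℝ) ^ d / (k : ℝ) ^ 2 := by
  calc (Nsph d k : ℝ) * nuNT d k
      ≤ (2 * ((k : ℝ) + d) ^ (d - 1)) *
          ((d : ℝ) ^ d / ((k : ℝ) ^ 2 * ((k : ℝ) + d) ^ (d - 1))) :=
        mul_le_mul (by exact_mod_cast Nsph_le_two_mul_pow d k hd) (nuNT_le_div d k hd hk)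
          (nuNT_nonneg d k) (by positivity)
    _ = 2 * (d : ℝ) ^ d / (k : ℝ) ^ 2 := by field_simp

/-- For every positive integer d, the series Σ_{k=1}^∞ N(d,k)·ν_d(k) converges. -/
theorem summable_Nsph_mul_nuNT (d : ℕ) (hd : 1 ≤ d) :
    Summable (fun k : ℕ => (Nsph d (k + 1) : ℝ) * nuNT d (k + 1)) := by
  have hdom : Summable (fun k : ℕ => 2 * (d : ℝ) ^ d / ((k + 1 : ℕ) : ℝ) ^ 2) := by
    simpa only [mul_one_div] using
      ((summable_nat_add_iff 1).mpr (summable_one_div_nat_pow.mpr one_lt_two)).mul_left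
        (2 * (d : ℝ) ^ d)
  exact hdom.of_nonneg_of_le (fun k => mul_nonneg (Nat.cast_nonneg _) (nuNT_nonneg _ _))
    (fun k => Nsph_mul_nuNT_le d (k + 1) hd k.succ_pos)
end

section
/- There exist absolute constants C4, C5 > 0 such that for every integer p that is either 1 or a positive even number there is a constant D(p) (depending only on p) with the property that for every integer d ≥ D(p): C4 · p^(−1/2) ≤ Σ_{k=p}^{⌊d^(0.99)⌋} N(d,k) · ν_d(k) ≤ C5 · p^(−1/2). -/
open Real Filter

/-! For `1 ≤ k ≤ d`, the effective Stirling bounds `√π ≤ n! / (√(2n) (n/e)^n) ≤ e/√2` give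
`C(k+d, k) ≍ (k+d)^(k+d) / (√k k^k d^d)`, and `N(d,k)` lies between `C(k+d, k)/2` and
`C(k+d, k)`. Since `ν_d(k) = k^k d^d / (k+d)^(k+d) · (k² + kd + d) / (k² (k+d))`, every term
`N(d,k) ν_d(k)` with `k ≤ d` is within constant factors of `k^(-3/2)`. As `⌊d^0.99⌋ ≤ d`, the sum
is bounded above by telescoping `k^(-3/2) ≤ 4 (k^(-1/2) - (k+1)^(-1/2))`, and once
`⌊d^0.99⌋ ≥ 2p` it is bounded below by its `p + 1` terms with `p ≤ k ≤ 2p`. -/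

namespace Stirling

theorem stirlingSeq_le_exp_one_div_sqrt_two {n : ℕ} (hn : n ≠ 0) :
    stirlingSeq n ≤ exp 1 / √2 := by
  obtain ⟨m, rfl⟩ := Nat.exists_eq_succ_of_ne_zero hn
  simpa using stirlingSeq'_antitone (Nat.zero_le m)

theorem factorial_eq_stirlingSeq_mul {n : ℕ} (hn : n ≠ 0) :
    (n.factorial : ℝ) = stirlingSeq n * √(2 * n) * (n / exp 1) ^ n := by
  have : (0 : ℝ) < n := by positivity
  rw [stirlingSeq]
  field_simp

end Stirling

open Stirling in
theorem choose_add_stirling_bounds {k d : ℕ} (hk : k ≠ 0) (hd : d ≠ 0) :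
    2 * π * ((k + d).choose k * (√k * √d * (k ^ k * d ^ d))) ≤
        exp 1 * √(k + d) * ((k : ℝ) + d) ^ (k + d) ∧
      √(2 * π) * √(k + d) * ((k : ℝ) + d) ^ (k + d) ≤
        exp 1 ^ 2 * ((k + d).choose k * (√k * √d * (k ^ k * d ^ d))) := by
  set Y : ℝ := (k + d).choose k * (√k * √d * (k ^ k * d ^ d))
  set X : ℝ := ((k : ℝ) + d) ^ (k + d)
  have hkd : k + d ≠ 0 := by omega
  have hs2 : √2 * √2 = (2 : ℝ) := Real.mul_self_sqrt zero_le_two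
  have key : stirlingSeq k * stirlingSeq d * (2 * Y) =
      stirlingSeq (k + d) * (√2 * √(k + d) * X) := by
    have hchoose :
        ((k + d).choose k : ℝ) * (k.factorial * d.factorial) = (k + d).factorial := by
      have := Nat.add_choose_mul_factorial_mul_factorial d k
      rw [add_comm d k] at this
      rw [← this]; push_cast; ring
    rw [factorial_eq_stirlingSeq_mul hk, factorial_eq_stirlingSeq_mul hd,
      factorial_eq_stirlingSeq_mul hkd] at hchoose
    simp only [Real.sqrt_mul zero_le_two, div_pow, Nat.cast_add] at hchoose
    field_simp at hchoose
    -- `field_simp` has cancelled one factor `√2` from `hchoose`; `hs2` puts it back.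
    apply mul_right_cancel₀ (by positivity : exp 1 ^ k * exp 1 ^ d ≠ 0)
    linear_combination √2 * hchoose - (k + d).choose k * stirlingSeq k * √k * k ^ k *
      stirlingSeq d * √d * d ^ d * (exp 1 ^ k * exp 1 ^ d) * hs2
  have hk' := sqrt_pi_le_stirlingSeq hk
  have hd' := sqrt_pi_le_stirlingSeq hd
  have hk0 := (Real.sqrt_nonneg π).trans hk'
  have hd0 := (Real.sqrt_nonneg π).trans hd'
  constructor
  · calc 2 * π * Y = √π * √π * (2 * Y) := by rw [Real.mul_self_sqrt pi_pos.le]; ring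
      _ ≤ stirlingSeq k * stirlingSeq d * (2 * Y) := by gcongr
      _ = stirlingSeq (k + d) * (√2 * √(k + d) * X) := key
      _ ≤ exp 1 / √2 * (√2 * √(k + d) * X) := by
        gcongr; exact stirlingSeq_le_exp_one_div_sqrt_two hkd
      _ = exp 1 * √(k + d) * X := by field_simp
  · calc √(2 * π) * √(k + d) * X = √π * (√2 * √(k + d) * X) := by
          rw [Real.sqrt_mul zero_le_two]; ring
      _ ≤ stirlingSeq (k + d) * (√2 * √(k + d) * X) := by
        gcongr; exact sqrt_pi_le_stirlingSeq hkd
      _ = stirlingSeq k * stirlingSeq d * (2 * Y) := key.symm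
      _ ≤ exp 1 / √2 * (exp 1 / √2) * (2 * Y) := by
        gcongr
        · exact stirlingSeq_le_exp_one_div_sqrt_two hk
        · exact stirlingSeq_le_exp_one_div_sqrt_two hd
      _ = exp 1 ^ 2 * Y := by
        field_simp
        rw [Real.sq_sqrt zero_le_two]

theorem choose_add_mul_div_pow_mem_Icc {k d : ℕ} (hk : k ≠ 0) (hkd : k ≤ d) :
    (k + d).choose k * (√k * k ^ k * d ^ d) / ((k : ℝ) + d) ^ (k + d) ∈
      Set.Icc (1 / 4 : ℝ) 1 := by
  have hd : d ≠ 0 := by omega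
  set B : ℝ := (k + d).choose k * (√k * k ^ k * d ^ d)
  set X : ℝ := ((k : ℝ) + d) ^ (k + d)
  obtain ⟨hupper, hlower⟩ := choose_add_stirling_bounds hk hd
  rw [show ((k + d).choose k : ℝ) * (√k * √d * (k ^ k * d ^ d)) = √d * B by ring]
    at hupper hlower
  have hX : 0 < X := by positivity
  have hkd' : (k : ℝ) ≤ d := by exact_mod_cast hkd
  have hsqrt_le : √((k : ℝ) + d) ≤ √2 * √d := by
    rw [← Real.sqrt_mul zero_le_two]; exact Real.sqrt_le_sqrt (by linarith)
  have hsqrt_ge : √(d : ℝ) ≤ √((k : ℝ) + d) := Real.sqrt_le_sqrt (by linarith)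
  have he2 : exp 1 ^ 2 ≤ 4 * √(2 * π) := by
    have : 2 ≤ √(2 * π) := by
      rw [Real.le_sqrt (by norm_num) (by positivity)]; linarith [pi_gt_three]
    nlinarith [Real.exp_pos 1, Real.exp_one_lt_d9]
  have he_sqrt2 : exp 1 * √2 ≤ 2 * π := by
    have : √2 < (3 / 2 : ℝ) := by
      rw [Real.sqrt_lt' (by norm_num)]; norm_num
    nlinarith [Real.exp_pos 1, Real.exp_one_lt_d9, Real.sqrt_nonneg 2, pi_gt_three]
  constructor
  · rw [le_div_iff₀ hX]
    suffices X ≤ 4 * B by linarith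
    refine le_of_mul_le_mul_left ?_ (by positivity : 0 < √(2 * π) * √d)
    calc √(2 * π) * √d * X ≤ √(2 * π) * √(k + d) * X := by gcongr
      _ ≤ exp 1 ^ 2 * (√d * B) := hlower
      _ ≤ (4 * √(2 * π)) * (√d * B) := by gcongr
      _ = √(2 * π) * √d * (4 * B) := by ring
  · rw [div_le_one hX]
    refine le_of_mul_le_mul_left ?_ (by positivity : 0 < 2 * π * √d)
    calc 2 * π * √d * B = 2 * π * (√d * B) := by ring
      _ ≤ exp 1 * √(k + d) * X := hupper
      _ ≤ exp 1 * (√2 * √d) * X := by gcongr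
      _ = (exp 1 * √2) * (√d * X) := by ring
      _ ≤ (2 * π) * (√d * X) := by gcongr
      _ = 2 * π * √d * X := by ring

theorem Nsph_le_choose (d k : ℕ) : Nsph d k ≤ (k + d).choose k := by
  unfold Nsph
  split_ifs <;> simp_all

theorem two_mul_choose_le_choose_add_two {j d : ℕ} (h : j + 2 ≤ d) :
    2 * (j + d).choose j ≤ (j + d + 2).choose (j + 2) := by
  have h1 := Nat.add_one_mul_choose_eq (j + d) j
  have h2 := Nat.add_one_mul_choose_eq (j + d + 1) (j + 1)
  have hpoly : 2 * ((j + 2) * (j + 1)) ≤ (j + d + 2) * (j + d + 1) := by nlinarith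
  refine Nat.le_of_mul_le_mul_left ?_ (by positivity : 0 < (j + 2) * (j + 1))
  calc (j + 2) * (j + 1) * (2 * (j + d).choose j)
      = 2 * ((j + 2) * (j + 1)) * (j + d).choose j := by ring
    _ ≤ (j + d + 2) * (j + d + 1) * (j + d).choose j := by gcongr
    _ = (j + 2) * (j + 1) * (j + d + 2).choose (j + 2) := by
      linear_combination (j + d + 2) * h1 + (j + 1) * h2

theorem choose_le_two_mul_Nsph {d k : ℕ} (hkd : k ≤ d) : (k + d).choose k ≤ 2 * Nsph d k := by
  unfold Nsph
  split_ifs with h0 h2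
  · simp [h0]
  · obtain ⟨j, rfl⟩ : ∃ j, k = j + 2 := ⟨k - 2, by omega⟩
    have := two_mul_choose_le_choose_add_two (j := j) (d := d) hkd
    rw [show j + 2 + d - 2 = j + d by omega, Nat.add_sub_cancel,
      show j + 2 + d = j + d + 2 by omega]
    omega
  · omega

theorem nuNT_eq {d k : ℕ} (hk : k ≠ 0) :
    nuNT d k =
      k ^ k * d ^ d / ((k : ℝ) + d) ^ (k + d) * ((k ^ 2 + k * d + d) / (k ^ 2 * (k + d))) := by
  have hk' : (0 : ℝ) < k := by positivity
  have hkd : (0 : ℝ) < k + d := by positivity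
  rw [nuNT, Real.rpow_sub hk', Real.rpow_neg hkd.le,
    show (k : ℝ) + d + 1 = ((k + d + 1 : ℕ) : ℝ) by push_cast; ring]
  simp only [Real.rpow_natCast, Real.rpow_two]
  field_simp
  ring

theorem Nsph_mul_nuNT_mul_eq {d k : ℕ} (hk : k ≠ 0) :
    Nsph d k * nuNT d k * (k * √k) =
      Nsph d k / (k + d).choose k *
        ((k + d).choose k * (√k * k ^ k * d ^ d) / ((k : ℝ) + d) ^ (k + d)) *
        (1 + d / (k * (k + d))) := by
  have hC : ((k + d).choose k : ℝ) ≠ 0 := Nat.cast_ne_zero.2 (Nat.choose_pos (by omega)).ne'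
  rw [nuNT_eq hk]
  field_simp

theorem Nsph_mul_nuNT_mem_Icc {d k : ℕ} (hk : k ≠ 0) (hkd : k ≤ d) :
    (Nsph d k : ℝ) * nuNT d k ∈ Set.Icc (1 / 8 * (k * √k)⁻¹) (2 * (k * √k)⁻¹) := by
  have hC : (0 : ℝ) < (k + d).choose k := Nat.cast_pos.2 (Nat.choose_pos (by omega))
  have hNC : (Nsph d k : ℝ) / (k + d).choose k ∈ Set.Icc (1 / 2 : ℝ) 1 := by
    rw [Set.mem_Icc, le_div_iff₀ hC, div_le_one hC]
    constructor
    · have : ((k + d).choose k : ℝ) ≤ 2 * Nsph d k := by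
        exact_mod_cast choose_le_two_mul_Nsph hkd
      linarith
    · exact_mod_cast Nsph_le_choose d k
  have hB := choose_add_mul_div_pow_mem_Icc hk hkd
  have hG : 1 + (d : ℝ) / (k * (k + d)) ∈ Set.Icc (1 : ℝ) 2 := by
    have hd_le : (d : ℝ) ≤ k * (k + d) := by
      nlinarith [show (1 : ℝ) ≤ k by exact_mod_cast Nat.one_le_iff_ne_zero.2 hk]
    constructor
    · have : (0 : ℝ) ≤ d / (k * (k + d)) := by positivity
      linarith
    · have : (d : ℝ) / (k * (k + d)) ≤ 1 := div_le_one_of_le₀ hd_le (by positivity)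
      linarith
  have hpos : (0 : ℝ) < k * √k := by positivity
  rw [(eq_mul_inv_iff_mul_eq₀ hpos.ne').2 (Nsph_mul_nuNT_mul_eq hk)]
  set F := (Nsph d k : ℝ) / (k + d).choose k
  set B := ((k + d).choose k : ℝ) * (√k * k ^ k * d ^ d) / ((k : ℝ) + d) ^ (k + d)
  set G := 1 + (d : ℝ) / (k * (k + d))
  have hlower : 1 / 8 ≤ F * B * G := by
    calc (1 / 8 : ℝ) = 1 / 2 * (1 / 4) * 1 := by norm_num
      _ ≤ F * B * G := by gcongr ?_ * ?_ * ?_; exacts [hNC.1, hB.1, hG.1]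
  have hupper : F * B * G ≤ 2 := by
    calc F * B * G ≤ 1 * 1 * 2 := by gcongr ?_ * ?_ * ?_; exacts [hNC.2, hB.2, hG.2]
      _ = 2 := by norm_num
  exact ⟨by gcongr, by gcongr⟩

theorem Finset.sum_Icc_le_sub_of_le_sub_succ {α : Type*} [AddCommGroup α] [PartialOrder α]
    [IsOrderedAddMonoid α] {f g : ℕ → α} {m n : ℕ} (hmn : m ≤ n)
    (hfg : ∀ k ∈ Finset.Icc m n, f k ≤ g k - g (k + 1)) :
    ∑ k ∈ Finset.Icc m n, f k ≤ g m - g (n + 1) := by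
  calc ∑ k ∈ Finset.Icc m n, f k ≤ ∑ k ∈ Finset.Icc m n, (g k - g (k + 1)) :=
        Finset.sum_le_sum hfg
    _ = g m - g (n + 1) := by
      rw [← neg_sub, ← Finset.sum_Icc_sub hmn, ← Finset.sum_neg_distrib]
      simp only [neg_sub]

theorem inv_mul_sqrt_le_four_mul_sub {x : ℝ} (hx : 1 ≤ x) :
    (x * √x)⁻¹ ≤ 4 * ((√x)⁻¹ - (√(x + 1))⁻¹) := by
  have hs : √x * √x = x := Real.mul_self_sqrt (by linarith)
  have ht : √(x + 1) * √(x + 1) = x + 1 := Real.mul_self_sqrt (by linarith)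
  have hs1 : 1 ≤ √x := Real.one_le_sqrt.2 hx
  have hdiff : (√x)⁻¹ - (√(x + 1))⁻¹ = (√x * √(x + 1) * (√x + √(x + 1)))⁻¹ := by
    field_simp
    nlinarith
  rw [hdiff, show x * √x = √x * √x * √x by rw [hs], ← div_eq_mul_inv, inv_eq_one_div,
    div_le_div_iff₀ (by positivity) (by positivity)]
  nlinarith [sq_nonneg (√(x + 1) - √x)]

theorem sum_Icc_inv_mul_sqrt_le {m n : ℕ} (hm : m ≠ 0) (hmn : m ≤ n) :
    ∑ k ∈ Finset.Icc m n, ((k : ℝ) * √k)⁻¹ ≤ 4 * (√m)⁻¹ := by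
  have htel := Finset.sum_Icc_le_sub_of_le_sub_succ (f := fun k : ℕ ↦ ((k : ℝ) * √k)⁻¹)
    (g := fun k : ℕ ↦ 4 * (√(k : ℝ))⁻¹) hmn
    (fun k hk ↦ by
      have : (1 : ℝ) ≤ k := by
        exact_mod_cast (Nat.one_le_iff_ne_zero.2 hm).trans (Finset.mem_Icc.1 hk).1
      push_cast
      linarith [inv_mul_sqrt_le_four_mul_sub this])
  have : 0 ≤ 4 * (√((n + 1 : ℕ) : ℝ))⁻¹ := by positivity
  linarith

theorem inv_sqrt_le_three_mul_sum_Icc_inv_mul_sqrt {m : ℕ} (hm : m ≠ 0) :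
    (√m)⁻¹ ≤ 3 * ∑ k ∈ Finset.Icc m (2 * m), ((k : ℝ) * √k)⁻¹ := by
  have hm' : (0 : ℝ) < m := by positivity
  have hterm :
      ∀ k ∈ Finset.Icc m (2 * m), (2 * m * √(2 * m) : ℝ)⁻¹ ≤ ((k : ℝ) * √k)⁻¹ := by
    intro k hk
    have hk : (m : ℝ) ≤ k ∧ (k : ℝ) ≤ 2 * m := by
      obtain ⟨h1, h2⟩ := Finset.mem_Icc.1 hk
      exact ⟨by exact_mod_cast h1, by exact_mod_cast h2⟩
    have : (0 : ℝ) < k := by linarith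
    gcongr <;> linarith
  have hsum := Finset.card_nsmul_le_sum _ _ _ hterm
  rw [Nat.card_Icc, show 2 * m + 1 - m = m + 1 by omega, nsmul_eq_mul] at hsum
  push_cast at hsum
  have hsqrt2 : √2 ≤ (3 / 2 : ℝ) := by
    rw [Real.sqrt_le_left (by norm_num)]; norm_num
  calc (√m)⁻¹ ≤ 3 * ((m + 1) * (2 * m * √(2 * m))⁻¹) := by
        rw [Real.sqrt_mul zero_le_two, ← div_eq_mul_inv, inv_eq_one_div, mul_div_assoc',
          div_le_div_iff₀ (by positivity) (by positivity)]
        have := Real.sqrt_pos.2 hm'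
        nlinarith [mul_pos hm' this]
    _ ≤ 3 * ∑ k ∈ Finset.Icc m (2 * m), ((k : ℝ) * √k)⁻¹ := by gcongr

theorem Nat.floor_rpow_le_self {a : ℝ} (ha : a ≤ 1) {d : ℕ} (hd : d ≠ 0) :
    ⌊(d : ℝ) ^ a⌋₊ ≤ d := by
  refine Nat.floor_le_of_le ?_
  calc (d : ℝ) ^ a ≤ (d : ℝ) ^ (1 : ℝ) :=
        Real.rpow_le_rpow_of_exponent_le (by exact_mod_cast Nat.one_le_iff_ne_zero.2 hd) ha
    _ = d := Real.rpow_one _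

theorem Nat.le_floor_rpow_of_sq_le {a : ℝ} (ha : 1 / 2 ≤ a) {n d : ℕ} (h : n ^ 2 ≤ d) :
    n ≤ ⌊(d : ℝ) ^ a⌋₊ := by
  rcases Nat.eq_zero_or_pos n with rfl | hn
  · exact Nat.zero_le _
  have hd : (1 : ℝ) ≤ d := by exact_mod_cast (Nat.one_le_pow _ _ hn).trans h
  refine Nat.le_floor ?_
  calc (n : ℝ) ≤ √d := Real.le_sqrt_of_sq_le (by exact_mod_cast h)
    _ = (d : ℝ) ^ (1 / 2 : ℝ) := Real.sqrt_eq_rpow _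
    _ ≤ (d : ℝ) ^ a := Real.rpow_le_rpow_of_exponent_le hd ha

/-- Absolute constants C4, C5 > 0 such that for every p that is 1 or positive even and all
large d: C4·p^(−1/2) ≤ Σ_{k=p}^{⌊d^0.99⌋} N(d,k)·ν_d(k) ≤ C5·p^(−1/2). -/
theorem sum_Nsph_mul_nuNT_middle_bounds :
    ∃ C4 C5 : ℝ, 0 < C4 ∧ 0 < C5 ∧
      ∀ p : ℕ, (p = 1 ∨ (Even p ∧ 0 < p)) → ∃ D : ℕ, ∀ d : ℕ, D ≤ d →
        C4 * (p : ℝ) ^ (-(1 / 2 : ℝ)) ≤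
            ∑ k ∈ Finset.Icc p ⌊(d : ℝ) ^ (0.99 : ℝ)⌋₊, (Nsph d k : ℝ) * nuNT d k ∧
        ∑ k ∈ Finset.Icc p ⌊(d : ℝ) ^ (0.99 : ℝ)⌋₊, (Nsph d k : ℝ) * nuNT d k ≤
            C5 * (p : ℝ) ^ (-(1 / 2 : ℝ)) := by
  refine ⟨1 / 24, 8, by norm_num, by norm_num, fun p hp ↦ ⟨(2 * p) ^ 2, fun d hd ↦ ?_⟩⟩
  have hp0 : p ≠ 0 := by rcases hp with rfl | ⟨-, hp⟩ <;> omega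
  set M := ⌊(d : ℝ) ^ (0.99 : ℝ)⌋₊
  have hpM : 2 * p ≤ M := Nat.le_floor_rpow_of_sq_le (by norm_num) hd
  have hMd : M ≤ d :=
    Nat.floor_rpow_le_self (by norm_num) (lt_of_lt_of_le (by positivity) hd).ne'
  have hterm := fun k (hk : k ∈ Finset.Icc p M) ↦
    Nsph_mul_nuNT_mem_Icc (d := d) (k := k) (by grind) (by grind)
  have hsub : Finset.Icc p (2 * p) ⊆ Finset.Icc p M := Finset.Icc_subset_Icc_right hpM
  rw [Real.rpow_neg (Nat.cast_nonneg p), ← Real.sqrt_eq_rpow]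
  constructor
  · calc 1 / 24 * (√p)⁻¹ ≤ 1 / 8 * ∑ k ∈ Finset.Icc p (2 * p), ((k : ℝ) * √k)⁻¹ := by
          linarith [inv_sqrt_le_three_mul_sum_Icc_inv_mul_sqrt hp0]
      _ = ∑ k ∈ Finset.Icc p (2 * p), 1 / 8 * ((k : ℝ) * √k)⁻¹ := Finset.mul_sum _ _ _
      _ ≤ ∑ k ∈ Finset.Icc p (2 * p), (Nsph d k : ℝ) * nuNT d k :=
          Finset.sum_le_sum fun k hk ↦ (hterm k (hsub hk)).1
      _ ≤ ∑ k ∈ Finset.Icc p M, (Nsph d k : ℝ) * nuNT d k :=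
          Finset.sum_le_sum_of_subset_of_nonneg hsub fun k hk _ ↦
            (hterm k hk).1.trans' (by positivity)
  · calc ∑ k ∈ Finset.Icc p M, (Nsph d k : ℝ) * nuNT d k
        ≤ ∑ k ∈ Finset.Icc p M, 2 * ((k : ℝ) * √k)⁻¹ :=
          Finset.sum_le_sum fun k hk ↦ (hterm k hk).2
      _ = 2 * ∑ k ∈ Finset.Icc p M, ((k : ℝ) * √k)⁻¹ := (Finset.mul_sum _ _ _).symm
      _ ≤ 2 * (4 * (√p)⁻¹) := by gcongr; exact sum_Icc_inv_mul_sqrt_le hp0 (by omega)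
      _ = 8 * (√p)⁻¹ := by ring
end

section
/- Let (λ_j)_{j≥1} be a summable sequence of nonnegative real numbers that is not identically zero, and let A > 0. Then the equation Σ_{j=1}^∞ min{λ_j, ε²} = A · ε⁴ has exactly one solution ε > 0. -/
open Real Filter

/-!
Dividing the equation by `ε⁴`, it reads `R ε = A` with `R ε = Σ_j min{λ_j, ε²} / ε⁴`.
Each term `min{λ_j, ε²} / ε⁴ = min{λ_j / ε⁴, 1 / ε²}` is nonincreasing in `ε > 0`, and
strictly decreasing when `λ_j > 0`, so `R` is strictly decreasing. It is continuous (the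
series is dominated by `Σ λ_j`), exceeds `A` for small `ε` (where `R ε ≥ 1 / ε²`) and is
below `A` for large `ε` (where `R ε ≤ Σ λ_j / ε⁴`); the intermediate value theorem gives
the solution and strict monotonicity its uniqueness.
-/

open Set

lemma min_sq_div_pow_four_le {l a b : ℝ} (hl : 0 ≤ l) (ha : 0 < a) (hab : a ≤ b) :
    min l (b ^ 2) / b ^ 4 ≤ min l (a ^ 2) / a ^ 4 := by
  have hb : 0 < b := ha.trans_le hab
  rw [div_le_div_iff₀ (by positivity) (by positivity),
    min_mul_of_nonneg _ _ (by positivity), min_mul_of_nonneg _ _ (by positivity)]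
  refine min_le_min (by gcongr) ?_
  calc b ^ 2 * a ^ 4 = (a ^ 2 * b ^ 2) * a ^ 2 := by ring
    _ ≤ (a ^ 2 * b ^ 2) * b ^ 2 := by gcongr
    _ = a ^ 2 * b ^ 4 := by ring

lemma min_sq_div_pow_four_lt {l a b : ℝ} (hl : 0 < l) (ha : 0 < a) (hab : a < b) :
    min l (b ^ 2) / b ^ 4 < min l (a ^ 2) / a ^ 4 := by
  have hb : 0 < b := ha.trans hab
  rw [div_lt_div_iff₀ (by positivity) (by positivity),
    min_mul_of_nonneg _ _ (by positivity), min_mul_of_nonneg _ _ (by positivity)]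
  refine lt_min ((min_le_left _ _).trans_lt (by gcongr)) ((min_le_right _ _).trans_lt ?_)
  calc b ^ 2 * a ^ 4 = (a ^ 2 * b ^ 2) * a ^ 2 := by ring
    _ < (a ^ 2 * b ^ 2) * b ^ 2 := by gcongr
    _ = a ^ 2 * b ^ 4 := by ring

noncomputable def mendelsonRatio {ι : Type*} (lam : ι → ℝ) (ε : ℝ) : ℝ :=
  (∑' j, min (lam j) (ε ^ 2)) / ε ^ 4

namespace mendelsonRatio

variable {ι : Type*} {lam : ι → ℝ}

lemma summable_min_sq (hnonneg : ∀ j, 0 ≤ lam j) (hsum : Summable lam) (ε : ℝ) :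
    Summable fun j ↦ min (lam j) (ε ^ 2) :=
  hsum.of_nonneg_of_le (fun j ↦ le_min (hnonneg j) (sq_nonneg ε)) (fun _ ↦ min_le_left _ _)

lemma eq_tsum_div (lam : ι → ℝ) (ε : ℝ) :
    mendelsonRatio lam ε = ∑' j, min (lam j) (ε ^ 2) / ε ^ 4 :=
  (tsum_div_const ..).symm

lemma strictAntiOn (hnonneg : ∀ j, 0 ≤ lam j) (hsum : Summable lam) {j₀ : ι}
    (hj₀ : 0 < lam j₀) : StrictAntiOn (mendelsonRatio lam) (Ioi 0) := by
  intro a ha b _ hab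
  simp only [eq_tsum_div]
  exact (summable_min_sq hnonneg hsum b).div_const _ |>.tsum_lt_tsum
    (fun j ↦ min_sq_div_pow_four_le (hnonneg j) ha hab.le)
    (min_sq_div_pow_four_lt hj₀ ha hab) ((summable_min_sq hnonneg hsum a).div_const _)

lemma continuousOn (hnonneg : ∀ j, 0 ≤ lam j) (hsum : Summable lam) :
    ContinuousOn (mendelsonRatio lam) (Ioi 0) := by
  have hS : Continuous fun ε : ℝ ↦ ∑' j, min (lam j) (ε ^ 2) := by
    refine continuous_tsum (fun j ↦ continuous_const.min (continuous_pow 2)) hsum fun j ε ↦ ?_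
    rw [Real.norm_of_nonneg (le_min (hnonneg j) (sq_nonneg ε))]
    exact min_le_left _ _
  exact hS.continuousOn.div (continuous_pow 4).continuousOn fun ε hε ↦ by
    have : (0 : ℝ) < ε := hε
    positivity

lemma exists_gt (hnonneg : ∀ j, 0 ≤ lam j) (hsum : Summable lam) {j₀ : ι} (hj₀ : 0 < lam j₀)
    {A : ℝ} (hA : 0 < A) : ∃ ε > 0, A < mendelsonRatio lam ε := by
  set ε := √(min (lam j₀) (1 / (2 * A)))
  have hε : 0 < ε := Real.sqrt_pos.2 (lt_min hj₀ (by positivity))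
  have hε2 : ε ^ 2 = min (lam j₀) (1 / (2 * A)) := Real.sq_sqrt (le_min hj₀.le (by positivity))
  refine ⟨ε, hε, ?_⟩
  have hAε : A * ε ^ 2 < 1 := by
    calc A * ε ^ 2 ≤ A * (1 / (2 * A)) := by gcongr; exact hε2 ▸ min_le_right _ _
      _ < 1 := by field_simp; norm_num
  calc A < 1 / ε ^ 2 := by rwa [lt_div_iff₀ (by positivity)]
    _ = min (lam j₀) (ε ^ 2) / ε ^ 4 := by
        rw [min_eq_right (hε2 ▸ min_le_left _ _)]; field_simp
    _ ≤ mendelsonRatio lam ε := by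
        rw [eq_tsum_div]
        exact ((summable_min_sq hnonneg hsum ε).div_const _).le_tsum j₀ fun j _ ↦
          div_nonneg (le_min (hnonneg j) (sq_nonneg ε)) (by positivity)

lemma exists_lt (hnonneg : ∀ j, 0 ≤ lam j) (hsum : Summable lam) {A : ℝ} (hA : 0 < A) :
    ∃ ε > 0, mendelsonRatio lam ε < A := by
  set T := ∑' j, lam j
  set ε := max 1 (T / A + 1)
  have hε : 1 ≤ ε := le_max_left _ _
  refine ⟨ε, by positivity, ?_⟩
  have hTε : T < A * ε ^ 4 := by
    calc T = A * (T / A) := by field_simp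
      _ < A * ε := by gcongr; exact (lt_add_one _).trans_le (le_max_right _ _)
      _ ≤ A * ε ^ 4 := by gcongr; exact le_self_pow₀ hε (by norm_num)
  calc mendelsonRatio lam ε ≤ T / ε ^ 4 := by
        unfold mendelsonRatio
        gcongr
        exact (summable_min_sq hnonneg hsum ε).tsum_le_tsum (fun j ↦ min_le_left _ _) hsum
    _ < A := by rw [div_lt_iff₀ (by positivity)]; linarith

end mendelsonRatio

/-- For a summable nonnegative sequence that is not identically zero and any A > 0, the
equation Σ_j min{λ_j, ε²} = A·ε⁴ has exactly one positive solution ε. -/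
theorem exists_unique_mendelson_solution (lam : ℕ → ℝ) (hnonneg : ∀ j, 0 ≤ lam j)
    (hsum : Summable lam) (hne : ∃ j, lam j ≠ 0) (A : ℝ) (hA : 0 < A) :
    ∃! ε : ℝ, 0 < ε ∧ (∑' j : ℕ, min (lam j) (ε ^ 2)) = A * ε ^ 4 := by
  obtain ⟨j₀, hj₀⟩ := hne
  have hj₀ : 0 < lam j₀ := (hnonneg j₀).lt_of_ne' hj₀
  have hiff : ∀ ε > 0, (∑' j, min (lam j) (ε ^ 2)) = A * ε ^ 4 ↔ mendelsonRatio lam ε = A :=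
    fun ε hε ↦ (div_eq_iff (by positivity)).symm
  have hanti := mendelsonRatio.strictAntiOn hnonneg hsum hj₀
  obtain ⟨a, ha, hRa⟩ := mendelsonRatio.exists_gt hnonneg hsum hj₀ hA
  obtain ⟨b, hb, hRb⟩ := mendelsonRatio.exists_lt hnonneg hsum hA
  obtain ⟨ε, hε, hRε⟩ := isPreconnected_Ioi.intermediate_value hb ha
    (mendelsonRatio.continuousOn hnonneg hsum) ⟨hRb.le, hRa.le⟩
  refine ⟨ε, ⟨hε, (hiff ε hε).2 hRε⟩, fun δ ⟨hδ, hδsol⟩ ↦ ?_⟩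
  exact hanti.injOn hδ hε (((hiff δ hδ).1 hδsol).trans hRε.symm)
end

section
/- Let (λ_j)_{j≥1} be a summable sequence of nonnegative real numbers that is not identically zero, and let B > 0. For each real n > 0, let ε_n denote the unique positive solution of Σ_{j=1}^∞ min{λ_j, ε²} = n · B · ε⁴. Then ε_n is strictly decreasing in n: for all reals n′ > n > 0 one has ε_{n′} < ε_n. -/
open Real Filter

/- For `ε > 0` the equation reads `n·B = F(ε) := (Σ_j min{λ_j, ε²}) / ε⁴`. Each term
`min{λ_j, ε²} / ε⁴ = min{λ_j / ε⁴, ε⁻²}` is antitone in `ε`, hence so is `F`; so `ε_n ≤ ε_{n'}`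
would force `n'·B = F(ε_{n'}) ≤ F(ε_n) = n·B`. -/

lemma antitoneOn_min_sq_div_pow_four {l : ℝ} (hl : 0 ≤ l) :
    AntitoneOn (fun ε : ℝ => min l (ε ^ 2) / ε ^ 4) (Set.Ioi 0) := by
  have hsplit : ∀ ε : ℝ, 0 < ε → min l (ε ^ 2) / ε ^ 4 = min (l / ε ^ 4) (ε ^ 2)⁻¹ := by
    intro ε hε
    rw [← min_div_div_right (pow_pos hε 4).le]
    congr 1
    field_simp
  intro a ha b hb hab
  simp only [hsplit a ha, hsplit b hb]
  exact min_le_min (div_le_div_of_nonneg_left hl (pow_pos ha 4) (pow_le_pow_left₀ ha.le hab 4))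
    (inv_anti₀ (pow_pos ha 2) (pow_le_pow_left₀ ha.le hab 2))

lemma antitoneOn_tsum_min_sq_div_pow_four {lam : ℕ → ℝ} (hnonneg : ∀ j, 0 ≤ lam j)
    (hsum : Summable lam) :
    AntitoneOn (fun ε : ℝ => (∑' j, min (lam j) (ε ^ 2)) / ε ^ 4) (Set.Ioi 0) := by
  have hsummable : ∀ ε : ℝ, Summable fun j => min (lam j) (ε ^ 2) / ε ^ 4 := fun ε =>
    (hsum.of_nonneg_of_le (fun j => le_min (hnonneg j) (sq_nonneg ε))
      fun j => min_le_left _ _).div_const _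
  intro a ha b hb hab
  simp only [← tsum_div_const]
  exact (hsummable b).tsum_le_tsum
    (fun j => antitoneOn_min_sq_div_pow_four (hnonneg j) ha hb hab) (hsummable a)

theorem mendelson_solution_strict_anti_general (lam : ℕ → ℝ) (hnonneg : ∀ j, 0 ≤ lam j)
    (hsum : Summable lam) (B : ℝ) (hB : 0 < B)
    (eps : ℝ → ℝ)
    (heps : ∀ n : ℝ, 0 < n →
      0 < eps n ∧ (∑' j : ℕ, min (lam j) ((eps n) ^ 2)) = n * B * (eps n) ^ 4) :
    ∀ n n' : ℝ, 0 < n → n < n' → eps n' < eps n := by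
  intro n n' hn hnn'
  obtain ⟨hpos, hsol⟩ := heps n hn
  obtain ⟨hpos', hsol'⟩ := heps n' (hn.trans hnn')
  by_contra! hle
  have hF := antitoneOn_tsum_min_sq_div_pow_four hnonneg hsum hpos hpos' hle
  simp only [hsol, hsol', mul_div_cancel_right₀ _ (pow_ne_zero 4 hpos.ne'),
    mul_div_cancel_right₀ _ (pow_ne_zero 4 hpos'.ne')] at hF
  exact hnn'.not_ge (le_of_mul_le_mul_right hF hB)

/-- If ε_n denotes the unique positive solution of Σ_j min{λ_j, ε²} = n·B·ε⁴, then ε_n is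
strictly decreasing in n > 0. -/
theorem mendelson_solution_strict_anti (lam : ℕ → ℝ) (hnonneg : ∀ j, 0 ≤ lam j)
    (hsum : Summable lam) (hne : ∃ j, lam j ≠ 0) (B : ℝ) (hB : 0 < B)
    (eps : ℝ → ℝ)
    (heps : ∀ n : ℝ, 0 < n →
      0 < eps n ∧ (∑' j : ℕ, min (lam j) ((eps n) ^ 2)) = n * B * (eps n) ^ 4) :
    ∀ n n' : ℝ, 0 < n → n < n' → eps n' < eps n :=
  mendelson_solution_strict_anti_general lam hnonneg hsum B hB eps heps
end

section
/- There exist an absolute constant D and absolute constants C1, C2 > 0 such that for every integer d ≥ D: C1 ≤ Σ_{k=1}^∞ N(d,k) · ν_d(k) ≤ C2; that is, the total trace-type sum Σ_{k≥1} N(d,k)·ν_d(k) is bounded above and below by absolute positive constants uniformly in the dimension d. -/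
open Real Filter

/- ### Auxiliary lemmas -/

lemma nsph_eq (d k : ℕ) (hk : 1 ≤ k) :
    (Nsph d k : ℝ) * (((k:ℝ)+d) * ((k:ℝ)+d-1)) = ((k+d).choose k : ℝ) * (d * (2*k+d-1)) := by
  match k, hk with
  | 1, _ =>
    rw [show Nsph d 1 = 1+d from by simp [Nsph, Nat.choose_one_right], Nat.choose_one_right]
    push_cast
    ring
  | (m+2), _ =>
    have h1 := Nat.add_one_mul_choose_eq (m+1+d) (m+1)
    have h2 := Nat.add_one_mul_choose_eq (m+d) m
    have key : (m+d).choose m * ((m+2+d) * (m+1+d)) = (m+2+d).choose (m+2) * ((m+2)*(m+1)) := by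
      have h1' : (m+2+d) * (m+1+d).choose (m+1) = (m+2+d).choose (m+2) * (m+2) := by
        have he : m+1+d+1 = m+2+d := by omega
        rw [he] at h1; convert h1 using 2 <;> omega
      have h2' : (m+1+d) * (m+d).choose m = (m+1+d).choose (m+1) * (m+1) := by
        have he : m+d+1 = m+1+d := by omega
        rw [he] at h2; convert h2 using 2 <;> omega
      calc (m+d).choose m * ((m+2+d) * (m+1+d))
          = (m+2+d) * ((m+1+d) * (m+d).choose m) := by ring
        _ = (m+2+d) * ((m+1+d).choose (m+1) * (m+1)) := by rw [h2']
        _ = ((m+2+d) * (m+1+d).choose (m+1)) * (m+1) := by ring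
        _ = ((m+2+d).choose (m+2) * (m+2)) * (m+1) := by rw [h1']
        _ = (m+2+d).choose (m+2) * ((m+2)*(m+1)) := by ring
    have hle : (m+d).choose m ≤ (m+2+d).choose (m+2) := by
      have hBA : (m+2)*(m+1) ≤ (m+2+d) * (m+1+d) := Nat.mul_le_mul (by omega) (by omega)
      have h3 : (m+d).choose m * ((m+2+d) * (m+1+d)) ≤ (m+2+d).choose (m+2) * ((m+2+d) * (m+1+d)) := by
        rw [key]; exact Nat.mul_le_mul_left _ hBA
      exact Nat.le_of_mul_le_mul_right h3 (by positivity)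
    have hN : Nsph d (m+2) = (m+2+d).choose (m+2) - (m+d).choose m := by
      have e1 : m+2+d-2 = m+d := by omega
      have e2 : m+2-2 = m := by omega
      simp [Nsph, e1, e2]
    rw [hN]
    have keyR : ((m+d).choose m : ℝ) * (((m:ℝ)+2+d) * ((m:ℝ)+1+d))
        = ((m+2+d).choose (m+2) : ℝ) * (((m:ℝ)+2)*((m:ℝ)+1)) := by
      exact_mod_cast congrArg (Nat.cast : ℕ → ℝ) key
    push_cast [hle]
    linear_combination -keyR

lemma fact_lower (n : ℕ) (hn : 1 ≤ n) :
    Real.sqrt π * (Real.sqrt (2*n) * ((n:ℝ)/exp 1)^n) ≤ (Nat.factorial n : ℝ) := by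
  obtain ⟨m, rfl⟩ := Nat.exists_eq_add_of_le hn
  have h1 : Real.sqrt π ≤ Stirling.stirlingSeq (1+m) := by
    have h := Stirling.stirlingSeq'_antitone
    simpa [Nat.add_comm] using
      h.le_of_tendsto ((Stirling.tendsto_stirlingSeq_sqrt_pi).comp (tendsto_add_atTop_nat 1)) m
  have hpos : 0 < Real.sqrt (2*(1+m:ℕ)) * (((1+m:ℕ):ℝ)/exp 1)^(1+m) := by
    have : (0:ℝ) < ((1+m:ℕ):ℝ) := by positivity
    positivity
  rw [Stirling.stirlingSeq, le_div_iff₀ hpos] at h1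
  linarith

lemma fact_upper (n : ℕ) (hn : 1 ≤ n) :
    (Nat.factorial n : ℝ) ≤ (exp 1 / Real.sqrt 2) * (Real.sqrt (2*n) * ((n:ℝ)/exp 1)^n) := by
  obtain ⟨m, rfl⟩ := Nat.exists_eq_add_of_le hn
  have h1 : Stirling.stirlingSeq (1+m) ≤ exp 1 / Real.sqrt 2 := by
    have := Stirling.stirlingSeq'_antitone (Nat.zero_le m)
    simpa [Nat.add_comm] using this
  have hpos : 0 < Real.sqrt (2*(1+m:ℕ)) * (((1+m:ℕ):ℝ)/exp 1)^(1+m) := by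
    have : (0:ℝ) < ((1+m:ℕ):ℝ) := by positivity
    positivity
  rw [Stirling.stirlingSeq, div_le_iff₀ hpos] at h1
  linarith
lemma choose_bound (k d : ℕ) (hk : 1 ≤ k) (hd : 1 ≤ d) :
    (((k+d).choose k : ℕ) : ℝ) ≤
      Real.sqrt (((k:ℝ)+d)/((k:ℝ)*d)) * ((k:ℝ)+d)^((k:ℝ)+(d:ℝ)) / ((k:ℝ)^(k:ℝ) * (d:ℝ)^(d:ℝ)) := by
  have hkpos : (0:ℝ) < k := by exact_mod_cast hk
  have hdpos : (0:ℝ) < d := by exact_mod_cast hd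
  have hnpos : (0:ℝ) < (k:ℝ)+d := by linarith
  have hchoose : (((k+d).choose k : ℕ) : ℝ) = (Nat.factorial (k+d) : ℝ) / ((Nat.factorial k : ℝ) * (Nat.factorial d : ℝ)) := by
    rw [eq_div_iff (by positivity)]
    have := Nat.choose_mul_factorial_mul_factorial (Nat.le_add_right k d)
    rw [Nat.add_sub_cancel_left] at this
    have := congrArg (Nat.cast : ℕ → ℝ) this
    push_cast at this
    linarith
  -- bound numerator and denominator
  have hnum := fact_upper (k+d) (by omega)
  have hkf := fact_lower k hk
  have hdf := fact_lower d hd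
  have hkfpos : (0:ℝ) < Real.sqrt π * (Real.sqrt (2*k) * ((k:ℝ)/exp 1)^k) := by positivity
  have hdfpos : (0:ℝ) < Real.sqrt π * (Real.sqrt (2*d) * ((d:ℝ)/exp 1)^d) := by positivity
  have step1 : (((k+d).choose k : ℕ) : ℝ) ≤
      ((exp 1 / Real.sqrt 2) * (Real.sqrt (2*(k+d:ℕ)) * (((k+d:ℕ):ℝ)/exp 1)^(k+d))) /
      ((Real.sqrt π * (Real.sqrt (2*k) * ((k:ℝ)/exp 1)^k)) * (Real.sqrt π * (Real.sqrt (2*d) * ((d:ℝ)/exp 1)^d))) := by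
    rw [hchoose]
    apply div_le_div₀ (by positivity) hnum (by positivity)
    exact mul_le_mul hkf hdf (le_of_lt hdfpos) (by positivity)
  refine step1.trans ?_
  -- convert rpow to nat pow
  rw [show (k:ℝ)+(d:ℝ) = ((k+d:ℕ):ℝ) by push_cast; ring]
  rw [Real.rpow_natCast, Real.rpow_natCast, Real.rpow_natCast]
  have s2n : Real.sqrt (2*((k+d:ℕ):ℝ)) = Real.sqrt 2 * Real.sqrt ((k+d:ℕ):ℝ) :=
    Real.sqrt_mul (by norm_num) _
  have s2k : Real.sqrt (2*(k:ℝ)) = Real.sqrt 2 * Real.sqrt (k:ℝ) :=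
    Real.sqrt_mul (by norm_num) _
  have s2d : Real.sqrt (2*(d:ℝ)) = Real.sqrt 2 * Real.sqrt (d:ℝ) :=
    Real.sqrt_mul (by norm_num) _
  have sdiv : Real.sqrt (((k+d:ℕ):ℝ)/((k:ℝ)*d)) = Real.sqrt ((k+d:ℕ):ℝ) / (Real.sqrt (k:ℝ) * Real.sqrt (d:ℝ)) := by
    rw [Real.sqrt_div (by positivity), Real.sqrt_mul hkpos.le]
  have spi : Real.sqrt π * Real.sqrt π = π := Real.mul_self_sqrt pi_nonneg
  have s22 : Real.sqrt 2 * Real.sqrt 2 = 2 := Real.mul_self_sqrt (by norm_num)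
  have hsn : (0:ℝ) < Real.sqrt ((k+d:ℕ):ℝ) := Real.sqrt_pos.mpr (by positivity)
  have hsk : (0:ℝ) < Real.sqrt (k:ℝ) := Real.sqrt_pos.mpr hkpos
  have hsd : (0:ℝ) < Real.sqrt (d:ℝ) := Real.sqrt_pos.mpr hdpos
  have hs2 : (0:ℝ) < Real.sqrt 2 := Real.sqrt_pos.mpr (by norm_num)
  have hsp : (0:ℝ) < Real.sqrt π := Real.sqrt_pos.mpr pi_pos
  have hepow : (0:ℝ) < exp 1 := exp_pos 1
  have hkk : (0:ℝ) < (k:ℝ)^k := by positivity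
  have hdd : (0:ℝ) < (d:ℝ)^d := by positivity
  have hnn : (0:ℝ) < ((k+d:ℕ):ℝ)^(k+d) := by positivity
  have hek : (0:ℝ) < (exp 1)^k := by positivity
  have hed : (0:ℝ) < (exp 1)^d := by positivity
  have epow : (((k+d:ℕ):ℝ)/exp 1)^(k+d) = ((k+d:ℕ):ℝ)^(k+d) / ((exp 1)^k * (exp 1)^d) := by
    rw [div_pow, pow_add (exp 1) k d]
  have ekpow : ((k:ℝ)/exp 1)^k = (k:ℝ)^k / (exp 1)^k := div_pow _ _ _
  have edpow : ((d:ℝ)/exp 1)^d = (d:ℝ)^d / (exp 1)^d := div_pow _ _ _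
  have keyeq : ((exp 1 / Real.sqrt 2) * (Real.sqrt (2*((k+d:ℕ)):ℝ) * (((k+d:ℕ):ℝ)/exp 1)^(k+d))) /
      ((Real.sqrt π * (Real.sqrt (2*(k:ℝ)) * ((k:ℝ)/exp 1)^k)) * (Real.sqrt π * (Real.sqrt (2*(d:ℝ)) * ((d:ℝ)/exp 1)^d)))
      = (exp 1 / (Real.sqrt 2 * Real.sqrt 2 * (Real.sqrt π * Real.sqrt π))) *
        ((Real.sqrt ((k+d:ℕ):ℝ) / (Real.sqrt (k:ℝ) * Real.sqrt (d:ℝ))) * (((k+d:ℕ):ℝ)^(k+d) / ((k:ℝ)^k * (d:ℝ)^d))) := by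
    rw [show (Real.sqrt (2*((k+d:ℕ)):ℝ)) = Real.sqrt (2*((k+d:ℕ):ℝ)) by norm_cast]
    rw [s2n, s2k, s2d, epow, ekpow, edpow]
    field_simp
  rw [keyeq, sdiv]
  have hconst : exp 1 / (Real.sqrt 2 * Real.sqrt 2 * (Real.sqrt π * Real.sqrt π)) ≤ 1 := by
    rw [s22, spi]
    rw [div_le_one (by positivity)]
    have h1 : exp 1 < 2.7182818286 := Real.exp_one_lt_d9
    have h2 : (3.14:ℝ) < π := by
      have := Real.pi_gt_d6
      linarith
    linarith
  calc (exp 1 / (Real.sqrt 2 * Real.sqrt 2 * (Real.sqrt π * Real.sqrt π))) *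
        ((Real.sqrt ((k+d:ℕ):ℝ) / (Real.sqrt (k:ℝ) * Real.sqrt (d:ℝ))) * (((k+d:ℕ):ℝ)^(k+d) / ((k:ℝ)^k * (d:ℝ)^d)))
      ≤ 1 * ((Real.sqrt ((k+d:ℕ):ℝ) / (Real.sqrt (k:ℝ) * Real.sqrt (d:ℝ))) * (((k+d:ℕ):ℝ)^(k+d) / ((k:ℝ)^k * (d:ℝ)^d))) := by
        apply mul_le_mul_of_nonneg_right hconst (by positivity)
    _ = (Real.sqrt ((k+d:ℕ):ℝ) / (Real.sqrt (k:ℝ) * Real.sqrt (d:ℝ))) * (((k+d:ℕ):ℝ)^(k+d)) / ((k:ℝ)^k * (d:ℝ)^d) := by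
        ring
lemma final_ineq (K Dr : ℝ) (hK : 1 ≤ K) (hD : 1 ≤ Dr) :
    Real.sqrt ((K+Dr)/(K*Dr)) * (Dr*(2*K+Dr-1)*(K^2+K*Dr+Dr)) / (K^2*(K+Dr)^2*(K+Dr-1))
      ≤ 12 / K^((3:ℝ)/2) := by
  have hK0 : (0:ℝ) < K := by linarith
  have hD0 : (0:ℝ) < Dr := by linarith
  have hn0 : (0:ℝ) < K+Dr := by linarith
  set sK := Real.sqrt K with hsKdef
  set sD := Real.sqrt Dr with hsDdef
  set sN := Real.sqrt (K+Dr) with hsNdef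
  have hsK2 : sK*sK = K := Real.mul_self_sqrt hK0.le
  have hsD2 : sD*sD = Dr := Real.mul_self_sqrt hD0.le
  have hsN2 : sN*sN = K+Dr := Real.mul_self_sqrt hn0.le
  have hsK0 : 0 < sK := Real.sqrt_pos.mpr hK0
  have hsD0 : 0 < sD := Real.sqrt_pos.mpr hD0
  have hsN0 : 0 < sN := Real.sqrt_pos.mpr hn0
  have hsKN : sK ≤ sN := Real.sqrt_le_sqrt (by linarith)
  have hsDN : sD ≤ sN := Real.sqrt_le_sqrt (by linarith)
  have hsqrtquot : Real.sqrt ((K+Dr)/(K*Dr)) = sN/(sK*sD) := by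
    rw [hsNdef, hsKdef, hsDdef, Real.sqrt_div hn0.le, Real.sqrt_mul hK0.le]
  have hrpow : K^((3:ℝ)/2) = K*sK := by
    rw [show (3:ℝ)/2 = 1 + 1/2 by norm_num, Real.rpow_add hK0, Real.rpow_one,
      hsKdef, Real.sqrt_eq_rpow]
  rw [hsqrtquot, hrpow]
  have hQ : (0:ℝ) < K^2*(K+Dr)^2*(K+Dr-1) := mul_pos (by positivity) (by nlinarith)
  rw [div_le_div_iff₀ hQ (by positivity)]
  -- clear the inner division
  rw [div_mul_eq_mul_div, div_mul_eq_mul_div, div_le_iff₀ (by positivity)]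
  -- goal: sN * (Dr*(2K+Dr-1)*(K²+KDr+Dr)) * (K*sK) ≤ 12*(K²(K+Dr)²(K+Dr-1)) * (sK*sD)
  have q1 : sN*Dr*K ≤ sD*(K+Dr)^2 := by
    calc sN*Dr*K = (sD*sD)*sN*K := by rw [hsD2]; ring
      _ ≤ (sD*sN)*sN*K := by gcongr
      _ = sD*((sN*sN)*K) := by ring
      _ = sD*((K+Dr)*K) := by rw [hsN2]
      _ ≤ sD*((K+Dr)*(K+Dr)) := by gcongr; linarith
      _ = sD*(K+Dr)^2 := by ring
  have q2 : sN*(Dr*Dr) ≤ sD*(K+Dr)^2 := by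
    calc sN*(Dr*Dr) = ((sD*sD)*Dr)*sN := by rw [hsD2]; ring
      _ ≤ ((sD*sN)*(K+Dr))*sN := by gcongr <;> linarith
      _ = sD*((sN*sN)*(K+Dr)) := by ring
      _ = sD*(K+Dr)^2 := by rw [hsN2]; ring
  have hR : sN*Dr*K*(K^2+K*Dr+Dr) ≤ 3*(K^2*(sD*(K+Dr)^2)) := by
    have e1 : sN*Dr*K*(K^2+K*Dr+Dr) = (sN*Dr*K)*K^2 + (sN*(Dr*Dr))*K^2 + (sN*(Dr*Dr))*K := by
      ring
    have b1 : (sN*Dr*K)*K^2 ≤ (sD*(K+Dr)^2)*K^2 := by gcongr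
    have b2 : (sN*(Dr*Dr))*K^2 ≤ (sD*(K+Dr)^2)*K^2 := by gcongr
    have b3 : (sN*(Dr*Dr))*K ≤ (sD*(K+Dr)^2)*K^2 := by
      calc (sN*(Dr*Dr))*K ≤ (sD*(K+Dr)^2)*K := by gcongr
        _ ≤ (sD*(K+Dr)^2)*K^2 := by
            have : K ≤ K^2 := by nlinarith
            gcongr
    rw [e1]; linarith
  have h1 : 2*K+Dr-1 ≤ 2*(K+Dr) := by linarith
  have h2 : K+Dr ≤ 2*(K+Dr-1) := by linarith
  calc sN * (Dr*(2*K+Dr-1)*(K^2+K*Dr+Dr)) * (K*sK)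
      ≤ sN * (Dr*(2*(K+Dr))*(K^2+K*Dr+Dr)) * (K*sK) := by
        gcongr <;> positivity
    _ = (2*(K+Dr)*sK) * (sN*Dr*K*(K^2+K*Dr+Dr)) := by ring
    _ ≤ (2*(K+Dr)*sK) * (3*(K^2*(sD*(K+Dr)^2))) := by
        have h3 : (0:ℝ) ≤ 2*(K+Dr)*sK := by positivity
        exact mul_le_mul_of_nonneg_left hR h3
    _ = 6 * (sK*sD*K^2*(K+Dr)^2) * (K+Dr) := by ring
    _ ≤ 6 * (sK*sD*K^2*(K+Dr)^2) * (2*(K+Dr-1)) := by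
        have h4 : (0:ℝ) ≤ 6 * (sK*sD*K^2*(K+Dr)^2) := by positivity
        exact mul_le_mul_of_nonneg_left h2 h4
    _ = 12*(K^2*(K+Dr)^2*(K+Dr-1)) * (sK*sD) := by ring
lemma term_bound (d k : ℕ) (hd : 1 ≤ d) (hk : 1 ≤ k) :
    (Nsph d k : ℝ) * nuNT d k ≤ 12 / (k:ℝ)^((3:ℝ)/2) := by
  have hK0 : (0:ℝ) < k := by exact_mod_cast hk
  have hD0 : (0:ℝ) < d := by exact_mod_cast hd
  have hK1 : (1:ℝ) ≤ k := by exact_mod_cast hk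
  have hD1 : (1:ℝ) ≤ d := by exact_mod_cast hd
  have hn0 : (0:ℝ) < (k:ℝ)+d := by linarith
  have hB : (0:ℝ) < ((k:ℝ)+d) * ((k:ℝ)+d-1) := mul_pos hn0 (by linarith)
  have hNsph : (Nsph d k : ℝ) =
      ((k+d).choose k : ℝ) * ((d:ℝ) * (2*(k:ℝ)+(d:ℝ)-1)) / (((k:ℝ)+d) * ((k:ℝ)+d-1)) := by
    rw [eq_div_iff (ne_of_gt hB)]
    exact nsph_eq d k hk
  have hnu0 : 0 ≤ nuNT d k := by
    unfold nuNT
    positivity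
  have hrest : 0 ≤ ((d:ℝ) * (2*(k:ℝ)+(d:ℝ)-1)) / (((k:ℝ)+d) * ((k:ℝ)+d-1)) * nuNT d k :=
    mul_nonneg (div_nonneg (by nlinarith) hB.le) hnu0
  have hstep : (Nsph d k : ℝ) * nuNT d k ≤
      (Real.sqrt (((k:ℝ)+d)/((k:ℝ)*d)) * ((k:ℝ)+d)^((k:ℝ)+(d:ℝ)) / ((k:ℝ)^(k:ℝ) * (d:ℝ)^(d:ℝ)))
        * (((d:ℝ) * (2*(k:ℝ)+(d:ℝ)-1)) / (((k:ℝ)+d) * ((k:ℝ)+d-1)) * nuNT d k) := by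
    rw [hNsph]
    have h := choose_bound k d hk hd
    calc ((k+d).choose k : ℝ) * ((d:ℝ) * (2*(k:ℝ)+(d:ℝ)-1)) / (((k:ℝ)+d) * ((k:ℝ)+d-1)) * nuNT d k
        = ((k+d).choose k : ℝ) *
          (((d:ℝ) * (2*(k:ℝ)+(d:ℝ)-1)) / (((k:ℝ)+d) * ((k:ℝ)+d-1)) * nuNT d k) := by ring
      _ ≤ _ := mul_le_mul_of_nonneg_right h hrest
  refine hstep.trans ?_
  have hab : ((k:ℝ)+d)^((k:ℝ)+(d:ℝ)) * ((k:ℝ)+(d:ℝ))^(-((k:ℝ)+(d:ℝ)+1)) = ((k:ℝ)+(d:ℝ))⁻¹ := by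
    rw [← Real.rpow_add hn0, show (k:ℝ)+(d:ℝ) + -((k:ℝ)+(d:ℝ)+1) = -1 by ring, Real.rpow_neg_one]
  have hc : (k:ℝ)^((k:ℝ)-2) = (k:ℝ)^(k:ℝ) * (((k:ℝ))^(2:ℕ))⁻¹ := by
    rw [show (k:ℝ)-2 = (k:ℝ) + (-2) by ring, Real.rpow_add hK0]
    congr 1
    rw [show (-2:ℝ) = -((2:ℕ):ℝ) by norm_num, Real.rpow_neg hK0.le, Real.rpow_natCast]
  have key : (Real.sqrt (((k:ℝ)+d)/((k:ℝ)*d)) * ((k:ℝ)+d)^((k:ℝ)+(d:ℝ)) / ((k:ℝ)^(k:ℝ) * (d:ℝ)^(d:ℝ)))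
        * (((d:ℝ) * (2*(k:ℝ)+(d:ℝ)-1)) / (((k:ℝ)+d) * ((k:ℝ)+d-1)) * nuNT d k)
      = Real.sqrt (((k:ℝ)+d)/((k:ℝ)*d)) *
          ((d:ℝ)*(2*(k:ℝ)+(d:ℝ)-1)*((k:ℝ)^2+(k:ℝ)*(d:ℝ)+(d:ℝ))) /
          ((k:ℝ)^2*((k:ℝ)+(d:ℝ))^2*((k:ℝ)+(d:ℝ)-1)) := by
    unfold nuNT
    rw [hc]
    set S := Real.sqrt (((k:ℝ)+d)/((k:ℝ)*d)) with hS
    set a := ((k:ℝ)+d)^((k:ℝ)+(d:ℝ)) with ha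
    set b := ((k:ℝ)+(d:ℝ))^(-((k:ℝ)+(d:ℝ)+1)) with hbdef
    set e := (k:ℝ)^(k:ℝ) with hedef
    set f := (d:ℝ)^(d:ℝ) with hfdef
    have ha0 : a ≠ 0 := ne_of_gt (Real.rpow_pos_of_pos hn0 _)
    have he0 : e ≠ 0 := ne_of_gt (Real.rpow_pos_of_pos hK0 _)
    have hf0 : f ≠ 0 := ne_of_gt (Real.rpow_pos_of_pos hD0 _)
    have hb2 : b = ((k:ℝ)+(d:ℝ))⁻¹ / a := by
      rw [eq_div_iff ha0, mul_comm]
      exact hab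
    rw [hb2]
    have hK2 : (k:ℝ) ≠ 0 := ne_of_gt hK0
    have hn2 : (k:ℝ)+(d:ℝ) ≠ 0 := ne_of_gt hn0
    have hn12 : (k:ℝ)+(d:ℝ)-1 ≠ 0 := by nlinarith
    field_simp
  rw [key]
  exact final_ineq (k:ℝ) (d:ℝ) hK1 hD1
lemma first_term (d : ℕ) (hd : 1 ≤ d) : Real.exp (-1) ≤ (Nsph d 1 : ℝ) * nuNT d 1 := by
  have hD0 : (0:ℝ) < d := by exact_mod_cast hd
  have hD1 : (1:ℝ) ≤ d := by exact_mod_cast hd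
  have h1p : (0:ℝ) < 1 + (d:ℝ) := by linarith
  have hNs : (Nsph d 1 : ℝ) = 1 + (d:ℝ) := by
    simp [Nsph, Nat.choose_one_right]
  have hnu : nuNT d 1 = (d:ℝ)^(d:ℝ) * ((1:ℝ) + (d:ℝ))^(-((1:ℝ) + (d:ℝ) + 1)) * (1 + 2*(d:ℝ)) := by
    unfold nuNT
    push_cast
    rw [Real.one_rpow]
    ring
  have hsplit : ((1:ℝ) + (d:ℝ))^(-((1:ℝ) + (d:ℝ) + 1)) =
      (((1:ℝ) + (d:ℝ))^((d:ℝ)))⁻¹ * (((1:ℝ) + (d:ℝ))^(2:ℕ))⁻¹ := by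
    rw [show -((1:ℝ) + (d:ℝ) + 1) = (-(d:ℝ)) + (-((2:ℕ):ℝ)) by push_cast; ring,
      Real.rpow_add h1p, Real.rpow_neg h1p.le, Real.rpow_neg h1p.le, Real.rpow_natCast]
    norm_num
  have hq : ((1:ℝ) + (d:ℝ))^((d:ℝ)) ≤ Real.exp 1 * (d:ℝ)^((d:ℝ)) := by
    have hbase : (1:ℝ) + (d:ℝ) ≤ (d:ℝ) * Real.exp (1/(d:ℝ)) := by
      have := Real.add_one_le_exp (1/(d:ℝ))
      have h2 : (d:ℝ) * (1/(d:ℝ) + 1) ≤ (d:ℝ) * Real.exp (1/(d:ℝ)) :=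
        mul_le_mul_of_nonneg_left this hD0.le
      have h3 : (d:ℝ) * (1/(d:ℝ) + 1) = 1 + (d:ℝ) := by field_simp
      linarith
    calc ((1:ℝ) + (d:ℝ))^((d:ℝ)) ≤ ((d:ℝ) * Real.exp (1/(d:ℝ)))^((d:ℝ)) :=
          Real.rpow_le_rpow h1p.le hbase hD0.le
      _ = (d:ℝ)^((d:ℝ)) * (Real.exp (1/(d:ℝ)))^((d:ℝ)) :=
          Real.mul_rpow hD0.le (Real.exp_pos _).le
      _ = (d:ℝ)^((d:ℝ)) * Real.exp ((1/(d:ℝ)) * (d:ℝ)) := by rw [← Real.exp_mul]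
      _ = Real.exp 1 * (d:ℝ)^((d:ℝ)) := by
          rw [show (1/(d:ℝ)) * (d:ℝ) = 1 by field_simp]
          ring
  have hApos : (0:ℝ) < ((1:ℝ) + (d:ℝ))^((d:ℝ)) := Real.rpow_pos_of_pos h1p _
  have hDpos : (0:ℝ) < (d:ℝ)^((d:ℝ)) := Real.rpow_pos_of_pos hD0 _
  have hmain : Real.exp (-1) ≤ (d:ℝ)^((d:ℝ)) * (((1:ℝ) + (d:ℝ))^((d:ℝ)))⁻¹ := by
    rw [← div_eq_mul_inv, Real.exp_neg, ← one_div, div_le_div_iff₀ (Real.exp_pos 1) hApos]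
    calc 1 * ((1:ℝ) + (d:ℝ))^((d:ℝ)) ≤ Real.exp 1 * (d:ℝ)^((d:ℝ)) := by
          rw [one_mul]; exact hq
      _ = (d:ℝ)^((d:ℝ)) * Real.exp 1 := by ring
  have hfrac : (1:ℝ) ≤ (1 + (d:ℝ)) * (1 + 2*(d:ℝ)) * (((1:ℝ) + (d:ℝ))^(2:ℕ))⁻¹ := by
    rw [le_mul_inv_iff₀ (by positivity), one_mul]
    nlinarith
  calc Real.exp (-1) = Real.exp (-1) * 1 := by ring
    _ ≤ ((d:ℝ)^((d:ℝ)) * (((1:ℝ) + (d:ℝ))^((d:ℝ)))⁻¹) *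
        ((1 + (d:ℝ)) * (1 + 2*(d:ℝ)) * (((1:ℝ) + (d:ℝ))^(2:ℕ))⁻¹) := by
        apply mul_le_mul hmain hfrac zero_le_one (by positivity)
    _ = (1 + (d:ℝ)) * ((d:ℝ)^(d:ℝ) * ((((1:ℝ) + (d:ℝ))^((d:ℝ)))⁻¹ * (((1:ℝ) + (d:ℝ))^(2:ℕ))⁻¹) * (1 + 2*(d:ℝ))) := by
        ring
    _ = (Nsph d 1 : ℝ) * nuNT d 1 := by
        rw [hNs, hnu, hsplit]

lemma term_nonneg (d k : ℕ) : 0 ≤ (Nsph d k : ℝ) * nuNT d k := by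
  apply mul_nonneg (Nat.cast_nonneg _)
  unfold nuNT
  positivity

/-- Absolute constants C1, C2 > 0 and D such that for every d ≥ D the trace-type sum
Σ_{k=1}^∞ N(d,k)·ν_d(k) lies between C1 and C2. -/
theorem trace_sum_bounded :
    ∃ D : ℕ, ∃ C1 C2 : ℝ, 0 < C1 ∧ 0 < C2 ∧
      ∀ d : ℕ, D ≤ d →
        C1 ≤ ∑' k : ℕ, (Nsph d (k + 1) : ℝ) * nuNT d (k + 1) ∧
        ∑' k : ℕ, (Nsph d (k + 1) : ℝ) * nuNT d (k + 1) ≤ C2 := by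
  have hsum0 : Summable (fun m : ℕ => 12 / ((m:ℝ))^((3:ℝ)/2)) := by
    have h := (Real.summable_one_div_nat_rpow (p := (3:ℝ)/2)).mpr (by norm_num)
    simpa [div_eq_mul_inv, one_div] using h.mul_left (12:ℝ)
  have hgsum : Summable (fun k : ℕ => 12 / (((k+1:ℕ)):ℝ)^((3:ℝ)/2)) :=
    (summable_nat_add_iff 1).mpr hsum0
  refine ⟨1, Real.exp (-1), ∑' k : ℕ, 12 / (((k+1:ℕ)):ℝ)^((3:ℝ)/2), Real.exp_pos _, ?_, ?_⟩
  · have h0 : 12 / (((0+1:ℕ)):ℝ)^((3:ℝ)/2) ≤ ∑' k : ℕ, 12 / (((k+1:ℕ)):ℝ)^((3:ℝ)/2) :=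
      Summable.le_tsum hgsum 0 (fun i _ => by positivity)
    have h1 : 12 / (((0+1:ℕ)):ℝ)^((3:ℝ)/2) = 12 := by
      norm_num
    linarith
  · intro d hd
    have hb : ∀ k : ℕ, (Nsph d (k+1) : ℝ) * nuNT d (k+1) ≤ 12 / (((k+1:ℕ)):ℝ)^((3:ℝ)/2) :=
      fun k => term_bound d (k+1) hd (Nat.le_add_left 1 k)
    have h0 : ∀ k : ℕ, 0 ≤ (Nsph d (k+1) : ℝ) * nuNT d (k+1) := fun k => term_nonneg d (k+1)
    have hsum : Summable (fun k : ℕ => (Nsph d (k+1) : ℝ) * nuNT d (k+1)) :=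
      Summable.of_nonneg_of_le h0 hb hgsum
    constructor
    · calc Real.exp (-1) ≤ (Nsph d (0+1) : ℝ) * nuNT d (0+1) := first_term d hd
        _ ≤ ∑' k : ℕ, (Nsph d (k+1) : ℝ) * nuNT d (k+1) :=
          Summable.le_tsum hsum 0 (fun i _ => h0 i)
    · exact Summable.tsum_le_tsum hb hsum hgsum
end
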